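/- arXiv:1401.1467 — 2 statements merged into one kernel-verified Lean document; each statement's English description precedes it below -/
import Mathlib

section
/- Non-effective content of Proposition 1. For every discrete semimeasure m there exists a measure on the binary tree, i.e. a function a : List Bool → ℝ≥0∞ with a [] = 1 and a(x0) + a(x1) = a x for every string x, such that for every infinite binary sequence ω : ℕ → Bool one has ∑' n : ℕ, m(ω↾n) / a(ω↾n) ≤ 1. -/
/-! Let `S x = ∑' z, m (x ++ z)` be the mass of all extensions of `x`, and let `a` split the mass
of `x` between `x0` and `x1` in proportion to `S (x0)` and `S (x1)`. Since
`S x = m x + S (x0) + S (x1)`, the potential `S x / a x` drops by exactly `m x / a x` when one moves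
from `x` to a child of positive mass, so along any path the sum of `m / a` is bounded by the
initial potential `S [] / a [] = ∑' x, m x ≤ 1`. -/

open scoped ENNReal NNReal

/-- The first `n` bits of an infinite binary sequence `ω`. -/
def prefixSeq (ω : ℕ → Bool) (n : ℕ) : List Bool := (List.range n).map ω

/-- A discrete semimeasure on binary strings. -/
def DiscreteSemimeasure (m : List Bool → ℝ≥0∞) : Prop := ∑' x : List Bool, m x ≤ 1

lemma prefixSeq_succ (ω : ℕ → Bool) (n : ℕ) :
    prefixSeq ω (n + 1) = prefixSeq ω n ++ [ω n] := by
  simp [prefixSeq, List.range_succ]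

theorem tsum_prefixSeq_le_of_potential {f Φ : List Bool → ℝ≥0∞}
    (hΦ : ∀ x b, f x + Φ (x ++ [b]) ≤ Φ x) (ω : ℕ → Bool) :
    ∑' n, f (prefixSeq ω n) ≤ Φ [] := by
  have partial_le : ∀ N, ∑ n ∈ Finset.range N, f (prefixSeq ω n) + Φ (prefixSeq ω N) ≤ Φ [] := by
    intro N
    induction N with
    | zero => simp [prefixSeq]
    | succ N ih =>
      calc ∑ n ∈ Finset.range (N + 1), f (prefixSeq ω n) + Φ (prefixSeq ω (N + 1))
          = ∑ n ∈ Finset.range N, f (prefixSeq ω n)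
              + (f (prefixSeq ω N) + Φ (prefixSeq ω N ++ [ω N])) := by
            rw [Finset.sum_range_succ, prefixSeq_succ, add_assoc]
        _ ≤ ∑ n ∈ Finset.range N, f (prefixSeq ω n) + Φ (prefixSeq ω N) := by gcongr; exact hΦ _ _
        _ ≤ Φ [] := ih
  exact ENNReal.tsum_le_of_sum_range_le fun N => le_self_add.trans (partial_le N)

theorem ENNReal.tsum_list_eq_add {α : Type*} (f : List α → ℝ≥0∞) :
    ∑' l, f l = f [] + ∑' p : α × List α, f (p.1 :: p.2) := by
  classical
  rw [ENNReal.tsum_eq_add_tsum_ite []]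
  congr 1
  have hcons : Function.Injective (fun p : α × List α => p.1 :: p.2) :=
    fun p q h => Prod.ext (List.cons.inj h).1 (List.cons.inj h).2
  rw [← hcons.tsum_eq]
  · simp
  · rintro (_ | ⟨a, l⟩) hl
    · simp at hl
    · exact ⟨(a, l), rfl⟩

section TreeMeasure

variable (w : List Bool → Bool → ℝ≥0∞)

/-- `treeMeasureRev w` reads a path from its last bit, so that appending a bit to the path is
structural recursion. -/
noncomputable def treeMeasureRev : List Bool → ℝ≥0∞
  | [] => 1
  | b :: r => treeMeasureRev r * w r.reverse b

noncomputable def treeMeasure (x : List Bool) : ℝ≥0∞ := treeMeasureRev w x.reverse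

@[simp] lemma treeMeasure_nil : treeMeasure w [] = 1 := rfl

lemma treeMeasure_append_singleton (x : List Bool) (b : Bool) :
    treeMeasure w (x ++ [b]) = treeMeasure w x * w x b := by
  simp [treeMeasure, treeMeasureRev]

variable {w}

lemma treeMeasure_split (hw : ∀ x, w x false + w x true = 1) (x : List Bool) :
    treeMeasure w (x ++ [false]) + treeMeasure w (x ++ [true]) = treeMeasure w x := by
  rw [treeMeasure_append_singleton, treeMeasure_append_singleton, ← mul_add, hw, mul_one]

lemma treeMeasure_le_one (hw : ∀ x, w x false + w x true = 1) (x : List Bool) :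
    treeMeasure w x ≤ 1 := by
  induction x using List.reverseRecOn with
  | nil => simp
  | append_singleton x b ih =>
    refine le_trans ?_ ih
    rw [← treeMeasure_split hw x]
    cases b
    · exact le_self_add
    · exact le_add_self

end TreeMeasure

section ExtensionMass

variable (m : List Bool → ℝ≥0∞)

noncomputable def extensionMass (x : List Bool) : ℝ≥0∞ := ∑' z, m (x ++ z)

noncomputable def properExtensionMass (x : List Bool) : ℝ≥0∞ :=
  extensionMass m (x ++ [false]) + extensionMass m (x ++ [true])

lemma extensionMass_nil : extensionMass m [] = ∑' x, m x := by
  simp [extensionMass]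

lemma extensionMass_eq_add (x : List Bool) :
    extensionMass m x = m x + properExtensionMass m x := by
  rw [extensionMass, ENNReal.tsum_list_eq_add, ENNReal.tsum_prod', tsum_fintype, Fintype.sum_bool]
  simp [properExtensionMass, extensionMass, add_comm (∑' z, m (x ++ false :: z))]

lemma le_extensionMass (x : List Bool) : m x ≤ extensionMass m x := by
  rw [extensionMass_eq_add]
  exact le_self_add

lemma extensionMass_append_singleton_le_properExtensionMass (x : List Bool) (b : Bool) :
    extensionMass m (x ++ [b]) ≤ properExtensionMass m x := by
  cases b
  · exact le_self_add
  · exact le_add_self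

lemma extensionMass_append_singleton_le (x : List Bool) (b : Bool) :
    extensionMass m (x ++ [b]) ≤ extensionMass m x := by
  rw [extensionMass_eq_add m x]
  exact (extensionMass_append_singleton_le_properExtensionMass m x b).trans le_add_self

lemma extensionMass_le_tsum (x : List Bool) : extensionMass m x ≤ ∑' y, m y :=
  ENNReal.tsum_comp_le_tsum_of_injective (fun _ _ => List.append_cancel_left) m

variable {m}

lemma extensionMass_ne_top (hm : DiscreteSemimeasure m) (x : List Bool) :
    extensionMass m x ≠ ∞ :=
  ((extensionMass_le_tsum m x).trans hm |>.trans_lt ENNReal.one_lt_top).ne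

lemma properExtensionMass_ne_top (hm : DiscreteSemimeasure m) (x : List Bool) :
    properExtensionMass m x ≠ ∞ :=
  ENNReal.add_ne_top.mpr ⟨extensionMass_ne_top hm _, extensionMass_ne_top hm _⟩

end ExtensionMass

section SplitWeight

variable (m : List Bool → ℝ≥0∞)

noncomputable def splitWeight (x : List Bool) (b : Bool) : ℝ≥0∞ :=
  if properExtensionMass m x = 0 then (if b then 0 else 1)
  else extensionMass m (x ++ [b]) / properExtensionMass m x

variable {m}

lemma splitWeight_false_add_true (hm : DiscreteSemimeasure m) (x : List Bool) :
    splitWeight m x false + splitWeight m x true = 1 := by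
  by_cases h : properExtensionMass m x = 0
  · simp [splitWeight, h]
  · rw [splitWeight, splitWeight, if_neg h, if_neg h, ENNReal.div_add_div_same]
    exact ENNReal.div_self h (properExtensionMass_ne_top hm x)

lemma splitWeight_eq_div {x : List Bool} {b : Bool} (hb : extensionMass m (x ++ [b]) ≠ 0) :
    splitWeight m x b = extensionMass m (x ++ [b]) / properExtensionMass m x := by
  refine if_neg fun h => hb (nonpos_iff_eq_zero.mp ?_)
  exact h ▸ extensionMass_append_singleton_le_properExtensionMass m x b

lemma treeMeasure_splitWeight_ne_zero (hm : DiscreteSemimeasure m) {x : List Bool}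
    (hx : extensionMass m x ≠ 0) : treeMeasure (splitWeight m) x ≠ 0 := by
  induction x using List.reverseRecOn with
  | nil => simp
  | append_singleton x b ih =>
    have hx' : extensionMass m x ≠ 0 :=
      ne_bot_of_le_ne_bot hx (extensionMass_append_singleton_le m x b)
    rw [treeMeasure_append_singleton, splitWeight_eq_div hx]
    exact mul_ne_zero (ih hx')
      (ENNReal.div_ne_zero.mpr ⟨hx, properExtensionMass_ne_top hm x⟩)

lemma extensionMass_div_treeMeasure_append_singleton (hm : DiscreteSemimeasure m)
    {x : List Bool} {b : Bool} (hb : extensionMass m (x ++ [b]) ≠ 0) :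
    extensionMass m (x ++ [b]) / treeMeasure (splitWeight m) (x ++ [b])
      = properExtensionMass m x / treeMeasure (splitWeight m) x := by
  have hx : extensionMass m x ≠ 0 :=
    ne_bot_of_le_ne_bot hb (extensionMass_append_singleton_le m x b)
  have hT : properExtensionMass m x ≠ 0 :=
    ne_bot_of_le_ne_bot hb (extensionMass_append_singleton_le_properExtensionMass m x b)
  have a_ne_top (y : List Bool) : treeMeasure (splitWeight m) y ≠ ∞ :=
    ((treeMeasure_le_one (splitWeight_false_add_true hm) y).trans_lt ENNReal.one_lt_top).ne
  rw [ENNReal.div_eq_div_iff (treeMeasure_splitWeight_ne_zero hm hx) (a_ne_top x)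
    (treeMeasure_splitWeight_ne_zero hm hb) (a_ne_top _), treeMeasure_append_singleton,
    splitWeight_eq_div hb, mul_assoc, ENNReal.div_mul_cancel hT (properExtensionMass_ne_top hm x)]

lemma div_treeMeasure_add_extensionMass_div_le (hm : DiscreteSemimeasure m) (x : List Bool)
    (b : Bool) :
    m x / treeMeasure (splitWeight m) x
        + extensionMass m (x ++ [b]) / treeMeasure (splitWeight m) (x ++ [b])
      ≤ extensionMass m x / treeMeasure (splitWeight m) x := by
  by_cases hb : extensionMass m (x ++ [b]) = 0
  · rw [hb, ENNReal.zero_div, add_zero]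
    gcongr
    exact le_extensionMass m x
  · rw [extensionMass_div_treeMeasure_append_singleton hm hb, ENNReal.div_add_div_same,
      ← extensionMass_eq_add]

end SplitWeight

/-- Non-effective content of Proposition 1: a measure on the binary tree making
the sum of `m/a` along every path at most 1. -/
theorem prop1_noneffective (m : List Bool → ℝ≥0∞) (hm : DiscreteSemimeasure m) :
    ∃ a : List Bool → ℝ≥0∞,
      a [] = 1 ∧ (∀ x : List Bool, a (x ++ [false]) + a (x ++ [true]) = a x) ∧
      ∀ ω : ℕ → Bool, ∑' n : ℕ, m (prefixSeq ω n) / a (prefixSeq ω n) ≤ 1 := by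
  refine ⟨treeMeasure (splitWeight m), treeMeasure_nil _,
    treeMeasure_split (splitWeight_false_add_true hm), fun ω => ?_⟩
  calc ∑' n, m (prefixSeq ω n) / treeMeasure (splitWeight m) (prefixSeq ω n)
      ≤ extensionMass m [] / treeMeasure (splitWeight m) [] :=
        tsum_prefixSeq_le_of_potential (div_treeMeasure_add_extensionMass_div_le hm) ω
    _ = ∑' x, m x := by rw [treeMeasure_nil, div_one, extensionMass_nil]
    _ ≤ 1 := hm
end

section
/- Riemann-sum inequality used in the finite-game analysis. For every real k ≥ 1 there exist a real ε with 0 < ε < 1 and n₀ : ℕ such that for every natural number n ≥ n₀, ∑_{i=1}^{n} (k·d_i·(1-ε)) / (n·((k+ε)·d_i - ε)) > 1, where for 1 ≤ i ≤ n one sets d_i := 1 - (k·(1-ε)·(1 - i/n))/(k+ε). -/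
/-!
With `x_i = ε + (1 - ε) i / n` one has `(k + ε) d_i - ε = k x_i` and `(k + ε) d_i = ε + k x_i`,
so the sum equals `(1 - ε) / (k + ε) * (k + ε H)` with `H = ∑ 1 / (n ε + (1 - ε) i)`, and it
exceeds `1` as soon as `(1 - ε) H > 1 + k`. Comparing `H` with `∫ dx / (n ε + x)` gives
`H ≥ log ((n ε + n + 1) / (n ε + 1)) ≥ -log (2 ε)` once `n ε ≥ 1`. Taking `ε = e^(-(2k+3)) / 2`
makes this `2k + 3`, and with `1 - ε ≥ 1 / 2` gives `(1 - ε) H ≥ k + 3 / 2`.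
-/

open Finset Real

theorem riemann_term_eq (k ε n t : ℝ) (hk : k ≠ 0) (hkε : k + ε ≠ 0) (hn : n ≠ 0)
    (hx : n * ε + (1 - ε) * t ≠ 0) :
    k * (1 - k * (1 - ε) * (1 - t / n) / (k + ε)) * (1 - ε) /
        (n * ((k + ε) * (1 - k * (1 - ε) * (1 - t / n) / (k + ε)) - ε)) =
      (1 - ε) / (k + ε) * (k / n + ε * (n * ε + (1 - ε) * t)⁻¹) := by
  have hden : n * ((k + ε) * (1 - k * (1 - ε) * (1 - t / n) / (k + ε)) - ε) =
      k * (n * ε + (1 - ε) * t) := by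
    field_simp
    ring
  rw [hden]
  generalize hx_def : n * ε + (1 - ε) * t = x at *
  field_simp
  rw [← hx_def]
  ring

theorem log_sub_log_le_sum_inv (a : ℝ) (ha : 0 < a + 1) (n : ℕ) :
    log (a + n + 1) - log (a + 1) ≤ ∑ i ∈ Icc 1 n, (a + i)⁻¹ := by
  induction n with
  | zero => simp
  | succ n ih =>
    rw [sum_Icc_succ_top (Nat.le_add_left 1 n)]
    push_cast
    have hx : 0 < a + n + 1 := by linarith [(n.cast_nonneg : (0 : ℝ) ≤ n)]
    have hstep : log (a + n + 1 + 1) - log (a + n + 1) ≤ (a + n + 1)⁻¹ := by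
      rw [← log_div (by positivity) hx.ne']
      calc log ((a + n + 1 + 1) / (a + n + 1))
          ≤ (a + n + 1 + 1) / (a + n + 1) - 1 := log_le_sub_one_of_pos (by positivity)
        _ = (a + n + 1)⁻¹ := by field_simp; ring
    rw [← add_assoc a]
    linarith

theorem neg_log_two_mul_le_sum_inv {ε : ℝ} (hε : 0 < ε) (hε1 : ε < 1) {n : ℕ}
    (hnε : 1 ≤ n * ε) :
    -log (2 * ε) ≤ ∑ i ∈ Icc 1 n, (n * ε + (1 - ε) * i)⁻¹ := by
  have hn : (0 : ℝ) < n := pos_of_mul_pos_left (one_pos.trans_le hnε) hε.le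
  have hlog_num : log n ≤ log (n * ε + n + 1) := log_le_log hn (by linarith)
  have hlog_den : log (n * ε + 1) ≤ log n + log (2 * ε) := by
    rw [← log_mul hn.ne' (by positivity)]
    exact log_le_log (by positivity) (by linarith)
  have hshrink : ∑ i ∈ Icc 1 n, (n * ε + (i : ℝ))⁻¹ ≤
      ∑ i ∈ Icc 1 n, (n * ε + (1 - ε) * i)⁻¹ := by
    refine sum_le_sum fun i hi => ?_
    have hi : (1 : ℝ) ≤ i := by exact_mod_cast (mem_Icc.mp hi).1
    apply inv_anti₀ <;> nlinarith
  linarith [log_sub_log_le_sum_inv (n * ε) (by linarith) n]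

theorem sum_riemann_term_eq {k ε : ℝ} (hk : 0 < k) (hε : 0 ≤ ε) (hε1 : ε ≤ 1) {n : ℕ}
    (hn : 0 < n) :
    ∑ i ∈ Icc 1 n,
        (k * (1 - k * (1 - ε) * (1 - (i : ℝ) / n) / (k + ε)) * (1 - ε)) /
          ((n : ℝ) * ((k + ε) * (1 - k * (1 - ε) * (1 - (i : ℝ) / n) / (k + ε)) - ε)) =
      (1 - ε) / (k + ε) * (k + ε * ∑ i ∈ Icc 1 n, (n * ε + (1 - ε) * i)⁻¹) := by
  have hn' : (n : ℝ) ≠ 0 := by positivity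
  have hx : ∀ i ∈ Icc 1 n, (n : ℝ) * ε + (1 - ε) * i ≠ 0 := fun i hi => by
    have : (1 : ℝ) ≤ i := by exact_mod_cast (mem_Icc.mp hi).1
    have : (1 : ℝ) ≤ n := by exact_mod_cast hn
    nlinarith
  rw [sum_congr rfl fun (i : ℕ) hi =>
      riemann_term_eq k ε n i hk.ne' (by positivity) hn' (hx i hi),
    ← mul_sum, sum_add_distrib, sum_const, Nat.card_Icc, ← mul_sum]
  simp only [Nat.add_sub_cancel, nsmul_eq_mul, mul_div_cancel₀ _ hn']

/-- Riemann-sum inequality used in the finite-game analysis. -/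
theorem riemann_sum_gt_one (k : ℝ) (hk : 1 ≤ k) :
    ∃ ε : ℝ, 0 < ε ∧ ε < 1 ∧ ∃ n₀ : ℕ, ∀ n : ℕ, n₀ ≤ n →
      1 < ∑ i ∈ Finset.Icc 1 n,
        (k * (1 - k * (1 - ε) * (1 - (i : ℝ) / n) / (k + ε)) * (1 - ε)) /
          ((n : ℝ) * ((k + ε) * (1 - k * (1 - ε) * (1 - (i : ℝ) / n) / (k + ε)) - ε)) := by
  set ε := exp (-(2 * k + 3)) / 2 with hε_def
  have hε : 0 < ε := by positivity
  have hε_half : ε ≤ 1 / 2 := by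
    linarith [exp_le_one_iff.mpr (by linarith : -(2 * k + 3) ≤ 0)]
  have hlog : -log (2 * ε) = 2 * k + 3 := by
    rw [hε_def, mul_div_cancel₀ _ two_ne_zero, log_exp, neg_neg]
  refine ⟨ε, hε, by linarith, ⌈1 / ε⌉₊, fun n hn => ?_⟩
  have hnε : 1 ≤ n * ε := by
    rw [← div_le_iff₀ hε]
    exact (Nat.le_ceil _).trans (by exact_mod_cast hn)
  have hn : 0 < n := by exact_mod_cast pos_of_mul_pos_left (one_pos.trans_le hnε) hε.le
  rw [sum_riemann_term_eq (by linarith) hε.le (by linarith) hn]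
  set H := ∑ i ∈ Icc 1 n, (n * ε + (1 - ε) * i)⁻¹
  have hH : 2 * k + 3 ≤ H := hlog ▸ neg_log_two_mul_le_sum_inv hε (by linarith) hnε
  have hH' : 1 + k < (1 - ε) * H := by nlinarith
  rw [div_mul_eq_mul_div, one_lt_div (by positivity)]
  nlinarith [mul_lt_mul_of_pos_left hH' hε]
end
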